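/- arXiv:2406.07948 — 7 statements merged into one kernel-verified Lean document; each statement's English description precedes it below -/
import Mathlib

section
/- Let c and k be natural numbers with 0 < c and c < k, let d, d0, d1 be natural numbers with d < 2^(k+1), d0 < 2^k, d1 < 2^k, and d0 + d1 = d. If d0 mod 2^c ≥ d mod 2^c, then ⌊d0 / 2^c⌋ + ⌈d1 / 2^c⌉ = ⌊d / 2^c⌋. -/
/-- First case in the proof of Theorem 1: if `d0 mod 2^c ≥ d mod 2^c`
then the truncation error bit is `0`. -/
theorem trunc_sum_error_bit_zero (c k : ℕ) (hc : 0 < c) (hck : c < k)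
    (d d0 d1 : ℕ) (hd : d < 2 ^ (k + 1)) (hd0 : d0 < 2 ^ k) (hd1 : d1 < 2 ^ k)
    (hsum : d0 + d1 = d) (hcase : d0 % 2 ^ c ≥ d % 2 ^ c) :
    d0 / 2 ^ c + (d1 + 2 ^ c - 1) / 2 ^ c = d / 2 ^ c := by
  set n := 2 ^ c with hn
  have hn2 : 2 ≤ n := by
    calc 2 = 2 ^ 1 := by norm_num
    _ ≤ 2 ^ c := Nat.pow_le_pow_right (by norm_num) hc
  have hnp : 0 < n := by omega
  subst hsum
  rw [Nat.add_div hnp]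
  have heq : d1 + n - 1 = d1 + (n - 1) := by omega
  rw [heq, Nat.add_div hnp]
  have h2 : (n - 1) / n = 0 := Nat.div_eq_of_lt (by omega)
  have h3 : (n - 1) % n = n - 1 := Nat.mod_eq_of_lt (by omega)
  have h4 : d0 % n < n := Nat.mod_lt _ hnp
  have h5 : d1 % n < n := Nat.mod_lt _ hnp
  have h6 : (d0 + d1) % n = (d0 % n + d1 % n) % n := Nat.add_mod _ _ _
  have h8 : (d0 % n + d1 % n < n ∧ (d0 % n + d1 % n) % n = d0 % n + d1 % n) ∨
      (n ≤ d0 % n + d1 % n ∧ (d0 % n + d1 % n) % n = d0 % n + d1 % n - n) := by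
    rcases lt_or_ge (d0 % n + d1 % n) n with h | h
    · exact Or.inl ⟨h, Nat.mod_eq_of_lt h⟩
    · refine Or.inr ⟨h, ?_⟩
      rw [Nat.mod_eq_sub_mod h, Nat.mod_eq_of_lt (by omega)]
  rw [h2, h3]
  rcases h8 with ⟨h8a, h8⟩ | ⟨h8a, h8⟩ <;> split_ifs with ha hb <;> omega
end

section
/- Let c and k be natural numbers with 0 < c and c < k, let d, d0, d1 be natural numbers with d < 2^(k+1), d0 < 2^k, d1 < 2^k, and d0 + d1 = d. If d0 mod 2^c < d mod 2^c, then ⌊d0 / 2^c⌋ + ⌈d1 / 2^c⌉ = ⌊d / 2^c⌋ + 1. -/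
/-- Second case in the proof of Theorem 1: if `d0 mod 2^c < d mod 2^c`
then the truncation error bit is `1`. -/
theorem trunc_sum_error_bit_one (c k : ℕ) (hc : 0 < c) (hck : c < k)
    (d d0 d1 : ℕ) (hd : d < 2 ^ (k + 1)) (hd0 : d0 < 2 ^ k) (hd1 : d1 < 2 ^ k)
    (hsum : d0 + d1 = d) (hcase : d0 % 2 ^ c < d % 2 ^ c) :
    d0 / 2 ^ c + (d1 + 2 ^ c - 1) / 2 ^ c = d / 2 ^ c + 1 := by
  set m := 2 ^ c with hm
  have hmpos : 0 < m := pow_pos two_pos c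
  have hdmod : d % m = (d0 % m + d1 % m) % m := by
    rw [← hsum, Nat.add_mod]
  have h1 : d1 % m ≠ 0 := by
    intro h
    rw [h, Nat.add_zero, Nat.mod_mod_of_dvd _ dvd_rfl] at hdmod
    omega
  have hnc : d0 % m + d1 % m < m := by
    by_contra h
    push_neg at h
    have h0 : d0 % m < m := Nat.mod_lt _ hmpos
    have h1' : d1 % m < m := Nat.mod_lt _ hmpos
    have : (d0 % m + d1 % m) % m = d0 % m + d1 % m - m := by
      rw [Nat.mod_eq_sub_mod h, Nat.mod_eq_of_lt (by omega)]
    omega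
  have hdiv : d / m = d0 / m + d1 / m := by
    rw [← hsum, Nat.add_div hmpos, if_neg (by omega)]
    omega
  have hceil : (d1 + m - 1) / m = d1 / m + 1 := by
    have hd1pos : 1 ≤ d1 := by
      rcases Nat.eq_zero_or_pos d1 with h | h
      · exfalso; apply h1; rw [h]; simp
      · exact h
    have heq : d1 + m - 1 = (d1 - 1) + m := by omega
    rw [heq, Nat.add_div_right _ hmpos]
    congr 1
    have heq2 : d1 = (d1 - 1) + 1 := by omega
    conv_rhs => rw [heq2]
    rw [Nat.succ_div, if_neg (by
      rw [← heq2]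
      intro hdvd
      exact h1 (Nat.dvd_iff_mod_eq_zero.mp hdvd))]
    omega
  omega
end

section
/- Let k ≥ 2 be a natural number, let x be a natural number with x < 2^(k−1), let d0, d1 be natural numbers with d0 < 2^k, d1 < 2^k, and suppose d0 + d1 − ((d0 + d1) mod 2^k) ∈ {0, 2^k} coincides with (d0 + d1) − x, i.e., (d0 + d1) mod 2^k = x. Set d = d0 + d1 and t = ⌊d0 / 2^(k−1)⌋ + ⌈d1 / 2^(k−1)⌉. Then t − (t mod 2) = ⌊d / 2^(k−1)⌋. -/
/-- Subtracting the least significant bit of the truncated sum yields the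
correct truncation of `d = d0 + d1`. -/
theorem trunc_sum_corrected (k : ℕ) (hk : 2 ≤ k) (x : ℕ) (hx : x < 2 ^ (k - 1))
    (d0 d1 : ℕ) (hd0 : d0 < 2 ^ k) (hd1 : d1 < 2 ^ k)
    (hmod : (d0 + d1) % 2 ^ k = x) :
    (d0 / 2 ^ (k - 1) + (d1 + 2 ^ (k - 1) - 1) / 2 ^ (k - 1)) -
        (d0 / 2 ^ (k - 1) + (d1 + 2 ^ (k - 1) - 1) / 2 ^ (k - 1)) % 2 =
      (d0 + d1) / 2 ^ (k - 1) := by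
  set m := 2 ^ (k - 1) with hmdef
  have hmpos : 0 < m := pow_pos (by norm_num) _
  have h2m : 2 ^ k = 2 * m := by
    rw [hmdef, ← pow_succ']
    congr 1; omega
  rw [h2m] at hd0 hd1 hmod
  -- the sum is x or x + 2m
  have hq1 : (d0 + d1) / (2 * m) ≤ 1 := by
    have : (d0 + d1) / (2 * m) < 2 := (Nat.div_lt_iff_lt_mul (by omega)).2 (by omega)
    omega
  have hq2 : 2 * m * ((d0 + d1) / (2 * m)) + x = d0 + d1 := by
    conv_rhs => rw [← Nat.div_add_mod (d0 + d1) (2 * m)]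
    rw [hmod]
  -- parity of (d0+d1)/m
  have heven : (d0 + d1) / m % 2 = 0 := by
    rcases Nat.le_one_iff_eq_zero_or_eq_one.1 hq1 with h | h <;> rw [h] at hq2
    · have hs : d0 + d1 = x := by omega
      rw [hs, Nat.div_eq_of_lt hx]
    · have hs : d0 + d1 = x + m * 2 := by omega
      rw [hs, Nat.add_mul_div_left _ _ hmpos, Nat.div_eq_of_lt hx]
  -- decompose d0 and d1
  set qa := d0 / m with hqa
  set ra := d0 % m with hra
  have hralt : ra < m := Nat.mod_lt _ hmpos
  have hda : m * qa + ra = d0 := Nat.div_add_mod d0 m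
  set qb := d1 / m with hqb
  set rb := d1 % m with hrb
  have hrblt : rb < m := Nat.mod_lt _ hmpos
  have hdb : m * qb + rb = d1 := Nat.div_add_mod d1 m
  clear_value qa ra qb rb
  rcases Nat.eq_zero_or_pos rb with h | h
  · have hceil : (d1 + m - 1) / m = qb := by
      have : d1 + m - 1 = m * qb + (m - 1) := by omega
      rw [this, Nat.mul_add_div hmpos, Nat.div_eq_of_lt (by omega)]; omega
    have hsum : (d0 + d1) / m = qa + qb := by
      have : d0 + d1 = m * (qa + qb) + ra := by rw [Nat.mul_add]; omega
      rw [this, Nat.mul_add_div hmpos, Nat.div_eq_of_lt hralt, Nat.add_zero]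
    rw [hceil, hsum]
    rw [hsum] at heven
    omega
  · have hceil : (d1 + m - 1) / m = qb + 1 := by
      have : d1 + m - 1 = m * (qb + 1) + (rb - 1) := by rw [Nat.mul_add]; omega
      rw [this, Nat.mul_add_div hmpos, Nat.div_eq_of_lt (by omega)]
    have hsum : (d0 + d1) / m = qa + qb + (ra + rb) / m := by
      have : d0 + d1 = m * (qa + qb) + (ra + rb) := by rw [Nat.mul_add]; omega
      rw [this, Nat.mul_add_div hmpos]
    have heps : (ra + rb) / m ≤ 1 := by
      have : (ra + rb) / m < 2 := (Nat.div_lt_iff_lt_mul hmpos).2 (by omega)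
      omega
    rw [hceil, hsum]
    rw [hsum] at heven
    clear hmod hq2 hq1 hmdef hqa hra hqb hrb hda hdb hd0 hd1 hx hk hceil hsum
    generalize (ra + rb) / m = eps at heven heps ⊢
    omega
end

section
/- Let k ≥ 2 be a natural number, let x be a natural number with x < 2^(k−1), and let d0, d1 be natural numbers with d0 < 2^k, d1 < 2^k, and (d0 + d1) mod 2^k = x. Set d = d0 + d1, t = ⌊d0 / 2^(k−1)⌋ + ⌈d1 / 2^(k−1)⌉, and b = t mod 2. Then d − (t − b) · 2^(k−1) = x. -/
/-- End-to-end correctness of the arithmetic underlying `ConvertShare`: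
removing the overflow `(t - b) * 2^(k-1)` from `d = d0 + d1` recovers the
secret `x`. -/
theorem convert_share_correct (k : ℕ) (hk : 2 ≤ k) (x : ℕ) (hx : x < 2 ^ (k - 1))
    (d0 d1 : ℕ) (hd0 : d0 < 2 ^ k) (hd1 : d1 < 2 ^ k)
    (hmod : (d0 + d1) % 2 ^ k = x)
    (t b : ℕ) (ht : t = d0 / 2 ^ (k - 1) + (d1 + 2 ^ (k - 1) - 1) / 2 ^ (k - 1))
    (hb : b = t % 2) :
    (d0 + d1) - (t - b) * 2 ^ (k - 1) = x := by
  have hm : 0 < 2 ^ (k - 1) := Nat.pow_pos (by norm_num)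
  obtain ⟨n, rfl⟩ : ∃ n, k = n + 1 := ⟨k - 1, by omega⟩
  have h2 : 2 ^ (n + 1) = 2 * 2 ^ (n + 1 - 1) := by
    simp [pow_succ, Nat.mul_comm]
  rw [h2] at hd0 hd1 hmod
  clear h2 hk
  generalize hgen : 2 ^ (n + 1 - 1) = m at hx hd0 hd1 hmod ht hm ⊢
  clear hgen
  have e0 : m * (d0 / m) + d0 % m = d0 := Nat.div_add_mod d0 m
  have e1 : m * (d1 / m) + d1 % m = d1 := Nat.div_add_mod d1 m
  have hr0 : d0 % m < m := Nat.mod_lt _ hm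
  have hr1 : d1 % m < m := Nat.mod_lt _ hm
  have hq0 : d0 / m < 2 := Nat.div_lt_of_lt_mul (by omega)
  have hq1 : d1 / m < 2 := Nat.div_lt_of_lt_mul (by omega)
  have ec : 2 * m * ((d0 + d1) / (2 * m)) + (d0 + d1) % (2 * m) = d0 + d1 :=
    Nat.div_add_mod _ _
  rw [hmod] at ec
  have hc : (d0 + d1) / (2 * m) < 2 := Nat.div_lt_of_lt_mul (by omega)
  have he : (d1 + m - 1) / m = if d1 % m = 0 then d1 / m else d1 / m + 1 := by
    split
    · next h =>
      have heq : d1 + m - 1 = (m - 1) + m * (d1 / m) := by omega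
      rw [heq, Nat.add_mul_div_left _ _ hm, Nat.div_eq_of_lt (by omega)]
      omega
    · next h =>
      have hmul : m * (d1 / m + 1) = m * (d1 / m) + m := by ring
      have heq : d1 + m - 1 = (d1 % m - 1) + m * (d1 / m + 1) := by omega
      rw [heq, Nat.add_mul_div_left _ _ hm, Nat.div_eq_of_lt (by omega)]
      omega
  rw [he] at ht
  subst hb
  generalize hg0 : d0 / m = q0 at e0 ht hq0
  generalize hg1 : d1 / m = q1 at e1 ht hq1
  generalize hgc : (d0 + d1) / (2 * m) = c at ec hc
  have hq0' : q0 = 0 ∨ q0 = 1 := by omega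
  have hq1' : q1 = 0 ∨ q1 = 1 := by omega
  have hc' : c = 0 ∨ c = 1 := by omega
  rcases hq0' with h | h <;> subst h <;>
    rcases hq1' with h' | h' <;> subst h' <;>
      rcases hc' with h'' | h'' <;> subst h'' <;>
        split at ht <;> subst ht <;> (try norm_num) <;> omega
end

section
/- Let n be a natural number, let α and β be linear orders, and let k1 : Fin n → α and k2 : Fin n → β be two key functions. Suppose σ is a stable sorting permutation for k1 and τ is a stable sorting permutation for the key k2 ∘ σ⁻¹. Then the composition τ ∘ σ is a stable sorting permutation for the lexicographic key i ↦ (k2 i, k1 i), where β × α carries the lexicographic order with the first component compared first. -/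
/-- `σ` is a stable sorting permutation for the key function `key`:
the reordered key `key ∘ σ⁻¹` is nondecreasing, and equal keys keep
their original relative order. Here `σ i` is the position element `i`
occupies after sorting. -/
def IsStableSort {n : ℕ} {γ : Type*} [LinearOrder γ] (key : Fin n → γ)
    (σ : Equiv.Perm (Fin n)) : Prop :=
  Monotone (key ∘ σ.symm) ∧ ∀ i j : Fin n, i < j → key i = key j → σ i < σ j

/-- Composing a stable sort by a secondary key with a stable sort by the
(reordered) primary key yields a stable sort by the lexicographic key. -/
theorem stableSort_compose {n : ℕ} {α β : Type*} [LinearOrder α] [LinearOrder β]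
    (k1 : Fin n → α) (k2 : Fin n → β) (σ τ : Equiv.Perm (Fin n))
    (hσ : IsStableSort k1 σ) (hτ : IsStableSort (k2 ∘ σ.symm) τ) :
    IsStableSort (fun i => toLex ((k2 i, k1 i) : β × α)) (σ.trans τ) := by
  obtain ⟨hσm, hσs⟩ := hσ
  obtain ⟨hτm, hτs⟩ := hτ
  constructor
  · intro a b hab
    -- elements to compare
    simp only [Function.comp, Equiv.symm_trans_apply]
    set p := τ.symm a with hp
    set q := τ.symm b with hq
    have hk2 : k2 (σ.symm p) ≤ k2 (σ.symm q) := hτm hab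
    rw [Prod.Lex.le_iff]
    rcases lt_or_eq_of_le hk2 with h | h
    · exact Or.inl h
    · refine Or.inr ⟨h, ?_⟩
      rcases eq_or_lt_of_le hab with rfl | hab'
      · exact le_rfl
      have hpq : p < q := by
        rcases lt_trichotomy p q with h' | h' | h'
        · exact h'
        · exfalso; rw [hp, hq] at h'
          exact absurd (τ.symm.injective h') (ne_of_lt hab')
        · exfalso
          have := hτs q p h' (by simpa [Function.comp] using h.symm)
          rw [hp, hq] at this
          simp at this
          exact absurd this (not_lt_of_gt hab')
      exact hσm hpq.le
  · intro i j hij hkey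
    have h2 : k2 i = k2 j := congrArg (Prod.fst ∘ ofLex) hkey
    have h1 : k1 i = k1 j := congrArg (Prod.snd ∘ ofLex) hkey
    have hs : σ i < σ j := hσs i j hij h1
    have := hτs (σ i) (σ j) hs (by simp [Function.comp, h2])
    simpa using this
end

section
/- Let n and c be natural numbers and let x : Fin n → ℕ. Suppose σ is a stable sorting permutation for the key i ↦ x i mod 2^c, and τ is a stable sorting permutation for the key j ↦ (x (σ⁻¹ j) / 2^c) mod 2 (the c-th bit of x, reordered by σ). Then τ ∘ σ is a stable sorting permutation for the key i ↦ x i mod 2^(c+1). -/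
/-- Loop invariant of `GenPerm`: updating a permutation that stably sorts by
the least significant `c` bits with the `c`-th bit vector yields a permutation
that stably sorts by the least significant `c+1` bits. -/
theorem radix_sort_invariant {n : ℕ} (c : ℕ) (x : Fin n → ℕ)
    (σ τ : Equiv.Perm (Fin n))
    (hσ : IsStableSort (fun i => x i % 2 ^ c) σ)
    (hτ : IsStableSort (fun j => x (σ.symm j) / 2 ^ c % 2) τ) :
    IsStableSort (fun i => x i % 2 ^ (c + 1)) (σ.trans τ) := by
  have key_eq : ∀ i : Fin n, x i % 2 ^ (c + 1) = x i % 2 ^ c + 2 ^ c * (x i / 2 ^ c % 2) := by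
    intro i; rw [pow_succ, Nat.mod_mul]
  have hlow : ∀ i : Fin n, x i % 2 ^ c < 2 ^ c := fun i => Nat.mod_lt _ (by positivity)
  have hbit2 : ∀ i : Fin n, x i / 2 ^ c % 2 < 2 := fun i => Nat.mod_lt _ (by norm_num)
  constructor
  · intro j₁ j₂ hle
    simp only [Function.comp, Equiv.symm_trans_apply]
    set a := τ.symm j₁ with ha
    set b := τ.symm j₂ with hb
    have hbit : x (σ.symm a) / 2 ^ c % 2 ≤ x (σ.symm b) / 2 ^ c % 2 := hτ.1 hle
    rcases lt_or_eq_of_le hbit with hlt | heq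
    · have h1 := hlow (σ.symm a)
      have hA : x (σ.symm a) / 2 ^ c % 2 = 0 := by have := hbit2 (σ.symm a); have := hbit2 (σ.symm b); omega
      have hB : x (σ.symm b) / 2 ^ c % 2 = 1 := by have := hbit2 (σ.symm a); have := hbit2 (σ.symm b); omega
      rw [key_eq, key_eq, hA, hB, Nat.mul_zero, Nat.mul_one]
      omega
    · have hab : a ≤ b := by
        by_contra h
        push_neg at h
        have := hτ.2 b a h heq.symm
        rw [ha, hb] at this
        simp only [Equiv.apply_symm_apply] at this
        exact absurd hle (not_le.mpr this)
      have hlowle : x (σ.symm a) % 2 ^ c ≤ x (σ.symm b) % 2 ^ c := hσ.1 hab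
      rw [key_eq, key_eq, heq]; omega
  · intro i j hij hkey
    simp only at hkey
    rw [key_eq, key_eq] at hkey
    have h1 := hlow i; have h2 := hlow j; have h3 := hbit2 i; have h4 := hbit2 j
    obtain ⟨hloweq, hbiteq⟩ : x i % 2 ^ c = x j % 2 ^ c ∧ x i / 2 ^ c % 2 = x j / 2 ^ c % 2 := by
      rcases (show x i / 2 ^ c % 2 = 0 ∨ x i / 2 ^ c % 2 = 1 by omega) with h | h <;>
        rcases (show x j / 2 ^ c % 2 = 0 ∨ x j / 2 ^ c % 2 = 1 by omega) with h' | h' <;>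
          rw [h, h'] at hkey <;>
            simp only [Nat.mul_zero, Nat.mul_one] at hkey <;>
              exact ⟨by omega, by omega⟩
    have hσij : σ i < σ j := hσ.2 i j hij hloweq
    have := hτ.2 (σ i) (σ j) hσij (by simp [hbiteq])
    simpa [Equiv.trans_apply] using this
end

section
/- Let n be a natural number and b : Fin n → Bool a bit vector, where Bool carries the order false < true. Define s : Fin n → ℕ by: s i = |{ j : Fin n | b j = false ∧ j < i }| if b i = false, and s i = |{ j : Fin n | b j = false }| + |{ j : Fin n | b j = true ∧ j < i }| if b i = true. Then s i < n for every i, the map i ↦ s i is a bijection from Fin n to Fin n, and the induced permutation is the (unique) stable sorting permutation for b. -/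
/-- The counting-sort destination of element `i` for the bit vector `b`:
zeros are placed first in their original order, then ones in their
original order. -/
def countSortIndex {n : ℕ} (b : Fin n → Bool) (i : Fin n) : ℕ :=
  if b i = false then
    (Finset.univ.filter fun j : Fin n => b j = false ∧ j < i).card
  else
    (Finset.univ.filter fun j : Fin n => b j = false).card +
      (Finset.univ.filter fun j : Fin n => b j = true ∧ j < i).card

open Finset

section Aux
variable {n : ℕ} (b : Fin n → Bool)

lemma csi_card_split :
    (univ.filter fun j : Fin n => b j = false).card +
      (univ.filter fun j : Fin n => b j = true).card = n := by
  have h := Finset.card_filter_add_card_filter_not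
    (s := (univ : Finset (Fin n))) (p := fun j => b j = false)
  simp only [Bool.not_eq_false, card_univ, Fintype.card_fin] at h
  exact h

lemma csi_strict {c : Bool} {i j : Fin n} (hi : b i = c) (hij : i < j) :
    (univ.filter fun k : Fin n => b k = c ∧ k < i).card <
      (univ.filter fun k : Fin n => b k = c ∧ k < j).card := by
  apply Finset.card_lt_card
  constructor
  · intro k hk
    simp only [mem_filter, mem_univ, true_and] at hk ⊢
    exact ⟨hk.1, hk.2.trans hij⟩
  · intro hsub
    have := hsub (by simp [hi, hij] : i ∈ univ.filter fun k : Fin n => b k = c ∧ k < j)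
    simp at this

lemma csi_lt_cardZ {i : Fin n} (hi : b i = false) :
    countSortIndex b i < (univ.filter fun j : Fin n => b j = false).card := by
  rw [countSortIndex, if_pos hi]
  apply Finset.card_lt_card
  constructor
  · intro k hk; simp only [mem_filter, mem_univ, true_and] at hk ⊢; exact hk.1
  · intro hsub
    have := hsub (by simp [hi] : i ∈ univ.filter fun j : Fin n => b j = false)
    simp at this

lemma csi_ge_cardZ {i : Fin n} (hi : b i = true) :
    (univ.filter fun j : Fin n => b j = false).card ≤ countSortIndex b i := by
  rw [countSortIndex, if_neg (by simp [hi])]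
  exact Nat.le_add_right _ _

lemma csi_lt (i : Fin n) : countSortIndex b i < n := by
  have hsplit := csi_card_split b
  cases hb : b i
  · have := csi_lt_cardZ b hb
    omega
  · rw [countSortIndex, if_neg (by simp [hb])]
    have h : (univ.filter fun j : Fin n => b j = true ∧ j < i).card <
        (univ.filter fun j : Fin n => b j = true).card := by
      apply Finset.card_lt_card
      constructor
      · intro k hk; simp only [mem_filter, mem_univ, true_and] at hk ⊢; exact hk.1
      · intro hsub
        have := hsub (by simp [hb] : i ∈ univ.filter fun j : Fin n => b j = true)
        simp at this
    omega

lemma csi_mono_eq {i j : Fin n} (hij : i < j) (hb : b i = b j) :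
    countSortIndex b i < countSortIndex b j := by
  cases hbi : b i
  · rw [countSortIndex, if_pos hbi, countSortIndex, if_pos (hb ▸ hbi)]
    exact csi_strict b hbi hij
  · rw [countSortIndex, if_neg (by simp [hbi]), countSortIndex, if_neg (by simp [hb ▸ hbi])]
    exact Nat.add_lt_add_left (csi_strict b hbi hij) _

lemma csi_inj : Function.Injective (countSortIndex b) := by
  intro i j h
  by_contra hne
  rcases Ne.lt_or_gt hne with hij | hij
  · rcases eq_or_ne (b i) (b j) with hb | hb
    · exact absurd h (csi_mono_eq b hij hb).ne
    · cases hbi : b i <;> cases hbj : b j <;> rw [hbi, hbj] at hb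
      · exact hb rfl
      · exact absurd h ((csi_lt_cardZ b hbi).trans_le (csi_ge_cardZ b hbj)).ne
      · exact absurd h.symm ((csi_lt_cardZ b hbj).trans_le (csi_ge_cardZ b hbi)).ne
      · exact hb rfl
  · rcases eq_or_ne (b i) (b j) with hb | hb
    · exact absurd h.symm (csi_mono_eq b hij hb.symm).ne
    · cases hbi : b i <;> cases hbj : b j <;> rw [hbi, hbj] at hb
      · exact hb rfl
      · exact absurd h ((csi_lt_cardZ b hbi).trans_le (csi_ge_cardZ b hbj)).ne
      · exact absurd h.symm ((csi_lt_cardZ b hbj).trans_le (csi_ge_cardZ b hbi)).ne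
      · exact hb rfl

end Aux

/-- Correctness of `GenPermByBit`: the counting-sort indices lie in `[0, n)`,
they induce a permutation of `Fin n`, and that permutation is the unique
stable sorting permutation for the bit vector `b`. -/
theorem genPermByBit_correct {n : ℕ} (b : Fin n → Bool) :
    (∀ i : Fin n, countSortIndex b i < n) ∧
    ∃ σ : Equiv.Perm (Fin n), (∀ i : Fin n, (σ i : ℕ) = countSortIndex b i) ∧
      IsStableSort b σ ∧
      ∀ τ : Equiv.Perm (Fin n), IsStableSort b τ → τ = σ := by
  refine ⟨csi_lt b, ?_⟩
  set f : Fin n → Fin n := fun i => ⟨countSortIndex b i, csi_lt b i⟩ with hf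
  have hfinj : Function.Injective f := fun i j h => csi_inj b (congrArg Fin.val h)
  let σ : Equiv.Perm (Fin n) := Equiv.ofBijective f (Finite.injective_iff_bijective.mp hfinj)
  have hσ : ∀ i, (σ i : ℕ) = countSortIndex b i := fun i => rfl
  have hstab : ∀ i j : Fin n, i < j → b i = b j → σ i < σ j := fun i j hij hb =>
    Fin.lt_def.mpr (csi_mono_eq b hij hb)
  have hmono : Monotone (b ∘ σ.symm) := by
    intro x y hxy
    simp only [Function.comp_apply]
    cases hx : b (σ.symm x) with
    | false => exact Bool.false_le _
    | true =>
      cases hy : b (σ.symm y) with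
      | true => exact le_refl _
      | false =>
        exfalso
        have h1 : (univ.filter fun j : Fin n => b j = false).card ≤ (x : ℕ) := by
          have := csi_ge_cardZ b hx
          rwa [← hσ (σ.symm x), Equiv.apply_symm_apply] at this
        have h2 : (y : ℕ) < (univ.filter fun j : Fin n => b j = false).card := by
          have := csi_lt_cardZ b hy
          rwa [← hσ (σ.symm y), Equiv.apply_symm_apply] at this
        exact absurd hxy (not_le.mpr (Fin.lt_def.mpr (h2.trans_le h1)))
  have hσstable : IsStableSort b σ := ⟨hmono, hstab⟩
  have key : ∀ (τ : Equiv.Perm (Fin n)), IsStableSort b τ →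
      ∀ i j : Fin n, (b i = false ∧ b j = true) ∨ (b i = b j ∧ i < j) → τ i < τ j := by
    rintro τ ⟨hm, hs⟩ i j (⟨hbi, hbj⟩ | ⟨hb, hij⟩)
    · by_contra hle
      rcases eq_or_lt_of_le (not_lt.mp hle) with he | hlt
      · have : i = j := τ.injective he.symm
        rw [this, hbj] at hbi; simp at hbi
      · have := hm hlt.le
        simp only [Function.comp_apply, Equiv.symm_apply_apply] at this
        rw [hbi, hbj] at this
        exact absurd this (by simp)
    · exact hs i j hij hb
  have hlex : ∀ i j : Fin n, i ≠ j →
      ((b i = false ∧ b j = true) ∨ (b i = b j ∧ i < j)) ∨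
      ((b j = false ∧ b i = true) ∨ (b j = b i ∧ j < i)) := by
    intro i j hne
    rcases hne.lt_or_gt with h | h
    · cases hbi : b i <;> cases hbj : b j
      · exact Or.inl (Or.inr ⟨rfl, h⟩)
      · exact Or.inl (Or.inl ⟨rfl, rfl⟩)
      · exact Or.inr (Or.inl ⟨rfl, rfl⟩)
      · exact Or.inl (Or.inr ⟨rfl, h⟩)
    · cases hbi : b i <;> cases hbj : b j
      · exact Or.inr (Or.inr ⟨rfl, h⟩)
      · exact Or.inl (Or.inl ⟨rfl, rfl⟩)
      · exact Or.inr (Or.inl ⟨rfl, rfl⟩)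
      · exact Or.inr (Or.inr ⟨rfl, h⟩)
  refine ⟨σ, hσ, hσstable, ?_⟩
  intro τ hτ
  have hsm : StrictMono (fun x => σ (τ.symm x)) := by
    intro x y hxy
    set i := τ.symm x with hi
    set j := τ.symm y with hj
    have hij : τ i < τ j := by
      rw [hi, hj, Equiv.apply_symm_apply, Equiv.apply_symm_apply]; exact hxy
    have hne : i ≠ j := fun e => absurd (e ▸ hij) (lt_irrefl _)
    rcases hlex i j hne with h | h
    · exact key σ hσstable i j h
    · exact absurd (key τ hτ j i h) (not_lt.mpr hij.le)
  have hsurj : Function.Surjective (fun x => σ (τ.symm x)) := (τ.symm.trans σ).surjective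
  let e : Fin n ≃o Fin n := StrictMono.orderIsoOfSurjective _ hsm hsurj
  have he : e = OrderIso.refl (Fin n) := Subsingleton.elim _ _
  ext x
  have h : σ (τ.symm (τ x)) = τ x := by
    have := congrFun (congrArg (fun (g : Fin n ≃o Fin n) => (g : Fin n → Fin n)) he) (τ x)
    simpa [e] using this
  rw [Equiv.symm_apply_apply] at h
  exact congrArg Fin.val h.symm
end
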